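/- Let g : ℂ → ℂ be holomorphic on the open unit disc Δ and continuous on the closed unit disc, suppose conj(ζ)·g(ζ) is a real number for every ζ with |ζ| = 1, and suppose g(1) = 0. Then there exists a ∈ ℂ such that g(ζ) = (1 − ζ)·(a − conj(a)·ζ) for every ζ in the closed unit disc. -/

import Mathlib

/-!
Write `g ζ = g 0 + ζ h ζ` with `h = dslope g 0`. On the unit circle `ζ⁻¹ = conj ζ`, so
`h ζ = conj ζ g ζ - conj ζ g 0`, and `φ ζ = h ζ - conj (g 0) ζ` differs from the real number
`conj ζ g ζ` by `2 Re (conj ζ g 0)`: the holomorphic function `φ` has real boundary values.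
By the maximum principle applied to `exp (± i φ)` it is real on the whole disc, hence constant
by the open mapping theorem. So `g ζ = g 0 + ζ (w + conj (g 0) ζ)`, and `g 1 = 0` forces
`w = -(g 0 + conj (g 0))`, which factors as `(1 - ζ) (g 0 - conj (g 0) ζ)`.
-/

open Complex ComplexConjugate Metric Set Bornology Topology Filter

section

variable {E : Type*} [NormedAddCommGroup E] [NormedSpace ℂ E]

theorem DiffContOnCl.dslope [CompleteSpace E] {f : ℂ → E} {s : Set ℂ} {a : ℂ}
    (hf : DiffContOnCl ℂ f s) (ha : s ∈ 𝓝 a) :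
    DiffContOnCl ℂ (dslope f a) s :=
  ⟨(differentiableOn_dslope ha).2 hf.1,
    (continuousOn_dslope (mem_of_superset ha subset_closure)).2
      ⟨hf.2, hf.differentiableAt' ha⟩⟩

theorem DiffContOnCl.im_le_of_forall_mem_frontier_im_le [Nontrivial E] {f : E → ℂ} {U : Set E}
    (hU : IsBounded U) (hf : DiffContOnCl ℂ f U)
    {C : ℝ} (hC : ∀ z ∈ frontier U, (f z).im ≤ C) {z : E} (hz : z ∈ closure U) :
    (f z).im ≤ C := by
  have norm_exp_neg_I_mul (w : ℂ) : ‖exp (-I * w)‖ = Real.exp w.im := by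
    simp [norm_exp, mul_re]
  have hexp : DiffContOnCl ℂ (fun z => exp (-I * f z)) U :=
    differentiable_exp.diffContOnCl.comp (hf.const_smul (-I)) (mapsTo_univ _ _)
  have := norm_le_of_forall_mem_frontier_norm_le hU hexp
    (fun w hw => (norm_exp_neg_I_mul _).trans_le (Real.exp_le_exp.2 (hC w hw))) hz
  rwa [norm_exp_neg_I_mul, Real.exp_le_exp] at this

theorem DiffContOnCl.im_eq_zero_of_forall_mem_frontier [Nontrivial E] {f : E → ℂ} {U : Set E}
    (hU : IsBounded U) (hf : DiffContOnCl ℂ f U)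
    (him : ∀ z ∈ frontier U, (f z).im = 0) {z : E} (hz : z ∈ closure U) : (f z).im = 0 := by
  have hle := hf.im_le_of_forall_mem_frontier_im_le hU (fun w hw => (him w hw).le) hz
  have hge := hf.neg.im_le_of_forall_mem_frontier_im_le hU (C := 0)
    (fun w hw => by simp [him w hw]) hz
  simp only [Pi.neg_apply, neg_im] at hge
  linarith

end

theorem AnalyticOnNhd.exists_forall_eq_of_im_eq_zero {f : ℂ → ℂ} {U : Set ℂ}
    (hf : AnalyticOnNhd ℂ f U) (hUo : IsOpen U) (hUc : IsPreconnected U)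
    (him : ∀ z ∈ U, (f z).im = 0) : ∃ w, ∀ z ∈ U, f z = w := by
  rcases U.eq_empty_or_nonempty with rfl | ⟨z, hz⟩
  · exact ⟨0, fun z hz => hz.elim⟩
  refine (hf.is_constant_or_isOpen hUc).resolve_right fun hopen => ?_
  -- an open set of complex numbers with nonpositive imaginary part avoids the real axis
  have himage : f '' U ⊆ interior {w : ℂ | w.im ≤ 0} :=
    interior_maximal (image_subset_iff.2 fun z hz => (him z hz).le) (hopen U subset_rfl hUo)
  rw [interior_setOfPred_im_le] at himage
  exact (him z hz).not_lt (himage (mem_image_of_mem f hz))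

theorem DiffContOnCl.exists_forall_closure_eq_of_frontier_im_eq_zero {f : ℂ → ℂ} {U : Set ℂ}
    (hf : DiffContOnCl ℂ f U) (hUb : IsBounded U) (hUo : IsOpen U) (hUc : IsPreconnected U)
    (him : ∀ z ∈ frontier U, (f z).im = 0) : ∃ w, ∀ z ∈ closure U, f z = w := by
  obtain ⟨w, hw⟩ := (hf.1.analyticOnNhd hUo).exists_forall_eq_of_im_eq_zero hUo hUc
    fun z hz => hf.im_eq_zero_of_forall_mem_frontier hUb him (subset_closure hz)
  exact ⟨w, EqOn.of_subset_closure hw hf.2 continuousOn_const subset_closure subset_rfl⟩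

theorem dslope_zero_of_norm_eq_one (g : ℂ → ℂ) {ζ : ℂ} (hζ : ‖ζ‖ = 1) :
    dslope g 0 ζ = conj ζ * (g ζ - g 0) := by
  have hζζ : conj ζ * ζ = 1 := by simp [conj_mul', hζ]
  have h := sub_smul_dslope g 0 ζ
  rw [sub_zero, smul_eq_mul] at h
  linear_combination conj ζ * h - dslope g 0 ζ * hζζ

theorem im_dslope_zero_sub_conj_mul_eq_zero {g : ℂ → ℂ} {ζ : ℂ} (hζ : ‖ζ‖ = 1)
    (hreal : ∃ r : ℝ, conj ζ * g ζ = r) : (dslope g 0 ζ - conj (g 0) * ζ).im = 0 := by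
  obtain ⟨r, hr⟩ := hreal
  rw [dslope_zero_of_norm_eq_one g hζ, mul_sub, hr]
  simp only [sub_im, ofReal_im, mul_im, conj_re, conj_im]
  ring

/-- If moreover `g(1) = 0`, then `g(ζ) = (1 − ζ)(a − conj(a)·ζ)`. -/
theorem stmt_12 (g : ℂ → ℂ)
    (hg : DifferentiableOn ℂ g (ball (0 : ℂ) 1))
    (hc : ContinuousOn g (closedBall (0 : ℂ) 1))
    (hb : ∀ ζ : ℂ, ‖ζ‖ = 1 → ∃ r : ℝ, starRingEnd ℂ ζ * g ζ = r)
    (h1 : g 1 = 0) :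
    ∃ a : ℂ, ∀ ζ ∈ closedBall (0 : ℂ) 1,
      g ζ = (1 - ζ) * (a - starRingEnd ℂ a * ζ) := by
  have hgc : DiffContOnCl ℂ g (ball 0 1) := ⟨hg, by rwa [closure_ball 0 one_ne_zero]⟩
  have hφ : DiffContOnCl ℂ (fun ζ => dslope g 0 ζ - conj (g 0) * ζ) (ball 0 1) :=
    (hgc.dslope (ball_mem_nhds 0 one_pos)).sub (differentiable_id.const_mul _).diffContOnCl
  obtain ⟨w, hw⟩ := hφ.exists_forall_closure_eq_of_frontier_im_eq_zero isBounded_ball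
    isOpen_ball (convex_ball 0 1).isPreconnected fun ζ hζ => by
      rw [frontier_ball 0 one_ne_zero, mem_sphere_zero_iff_norm] at hζ
      exact im_dslope_zero_sub_conj_mul_eq_zero hζ (hb ζ hζ)
  rw [closure_ball 0 one_ne_zero] at hw
  have hg_eq : ∀ ζ ∈ closedBall (0 : ℂ) 1, g ζ = g 0 + ζ * (w + conj (g 0) * ζ) := by
    intro ζ hζ
    have hslope := sub_smul_dslope g 0 ζ
    rw [sub_zero, smul_eq_mul] at hslope
    linear_combination -hslope + ζ * hw ζ hζ
  have hw1 : w = -(g 0 + conj (g 0)) := by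
    linear_combination -(hg_eq 1 (by simp)) + h1
  exact ⟨g 0, fun ζ hζ => by rw [hg_eq ζ hζ, hw1]; ring⟩
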